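/- Let $G$ be a group acting on sets $S$ and $A$, and let $P: S \times A \times S \to \mathbb{R}$ and $R: S \times A \to \mathbb{R}$ satisfy the GMDP symmetry conditions $P(g\cdot s'\mid g\cdot s, g\cdot a) = P(s'\mid s,a)$ and $R(g\cdot s, g\cdot a) = R(s,a)$ for all $g \in G$. Then for any $G$-invariant stationary policy $\pi: S \times A \to [0,1]$ (with $\pi(g\cdot a \mid g\cdot s) = \pi(a\mid s)$), the policy evaluation operator $(\mathcal{T}^\pi V)(s) = \sum_a \pi(a\mid s)\big(R(s,a) + \gamma\sum_{s'}P(s'\mid s,a)V(s')\big)$ maps $G$-invariant value functions to $G$-invariant value functions. -/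
import Mathlib

theorem policy_evaluation_preserves_invariance
    {G S A : Type*} [Group G] [Fintype S] [Fintype A]
    [MulAction G S] [MulAction G A]
    (P : S → A → S → ℝ) (R : S → A → ℝ) (γ : ℝ)
    (hP : ∀ (g : G) (s : S) (a : A) (s' : S), P (g • s) (g • a) (g • s') = P s a s')
    (hR : ∀ (g : G) (s : S) (a : A), R (g • s) (g • a) = R s a)
    (π : S → A → ℝ)
    (hπ01 : ∀ (s : S) (a : A), π s a ∈ Set.Icc (0 : ℝ) 1)
    (hπ : ∀ (g : G) (s : S) (a : A), π (g • s) (g • a) = π s a)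
    (V : S → ℝ) (hV : ∀ (g : G) (s : S), V (g • s) = V s) :
    ∀ (g : G) (s : S),
      (∑ a : A, π (g • s) a * (R (g • s) a + γ * ∑ s' : S, P (g • s) a s' * V s'))
        = ∑ a : A, π s a * (R s a + γ * ∑ s' : S, P s a s' * V s') := by
  intro g s
  refine Fintype.sum_equiv (MulAction.toPerm g⁻¹) _ _ fun a => ?_
  simp only [MulAction.toPerm_apply]
  have hinner : (∑ s' : S, P (g • s) a s' * V s') = ∑ s' : S, P s (g⁻¹ • a) s' * V s' := by
    refine Fintype.sum_equiv (MulAction.toPerm g⁻¹) _ _ fun s' => ?_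
    simp only [MulAction.toPerm_apply]
    rw [← hP g s (g⁻¹ • a) (g⁻¹ • s'), ← hV g (g⁻¹ • s'), smul_inv_smul, smul_inv_smul]
  rw [hinner, ← hπ g s (g⁻¹ • a), ← hR g s (g⁻¹ • a), smul_inv_smul]
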